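/- Let X be a finite nonempty set, E ⊆ X × X strongly connected, C, F_1, …, F_K : E → ℝ with F_1, …, F_K linearly independent modulo N, μ_1, …, μ_K ∈ ℝ with mixture family M = M(μ_1,…,μ_K) nonempty, and let ψ : ℝ^K → ℝ, κ : ℝ^K → (X → ℝ) be such that for each θ ∈ ℝ^K, w_θ(y|x) = exp(C(x,y) + Σ_k θ_k F_k(x,y) + κ_θ(y) − κ_θ(x) − ψ(θ)) on E (0 off E) is a Markov kernel. Let w_* = w_{θ_*} be the unique element of M ∩ 𝔈 with natural parameter θ_*. Then θ_* is the global minimizer over ℝ^K of the function θ ↦ ψ(θ) − Σ_{k=1}^K θ_k μ_k; that is, ψ(θ_*) − Σ_k θ_{*k} μ_k ≤ ψ(θ) − Σ_k θ_k μ_k for all θ ∈ ℝ^K, with equality only when θ = θ_*. -/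

import Mathlib

open scoped Classical
open Finset

/-- A (row-stochastic) Markov kernel on a finite set `X`: `w x y` means `w(y|x)`. -/
def IsMarkovKernel {X : Type*} [Fintype X] (w : X → X → ℝ) : Prop :=
  (∀ x y : X, 0 ≤ w x y) ∧ ∀ x : X, ∑ y : X, w x y = 1

/-- The directed graph `(X, E)` is strongly connected: from any `x` there is a
finite directed path along edges of `E` to any `y`. -/
def StronglyConnected {X : Type*} (E : Set (X × X)) : Prop :=
  ∀ x y : X, Relation.ReflTransGen (fun a b => (a, b) ∈ E) x y

/-- Membership in `W(X,E)`: a Markov kernel whose support is exactly `E`. -/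
def MemW {X : Type*} [Fintype X] (E : Set (X × X)) (w : X → X → ℝ) : Prop :=
  IsMarkovKernel w ∧ ∀ x y : X, 0 < w x y ↔ (x, y) ∈ E

/-- `p` is a stationary probability distribution of the kernel `w`. -/
def IsStationaryDistrib {X : Type*} [Fintype X] (w : X → X → ℝ) (p : X → ℝ) : Prop :=
  (∀ x : X, 0 ≤ p x) ∧ (∑ x : X, p x = 1) ∧ ∀ y : X, ∑ x : X, p x * w x y = p y

/-- The stationary distribution `p_w` of `w` (unique for `w ∈ W(X,E)` with
`(X,E)` strongly connected), obtained by choice from existence. -/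
noncomputable def statDist {X : Type*} [Fintype X] (w : X → X → ℝ) : X → ℝ :=
  if h : ∃ p : X → ℝ, IsStationaryDistrib w p then h.choose else fun _ => 0

/-- The divergence rate `D(v|w) = Σ_{(x,y)∈E} p_v(x) v(y|x) log (v(y|x)/w(y|x))`. -/
noncomputable def divRate {X : Type*} [Fintype X] (E : Set (X × X))
    (v w : X → X → ℝ) : ℝ :=
  ∑ x : X, ∑ y : X,
    if (x, y) ∈ E then statDist v x * v x y * Real.log (v x y / w x y) else 0

/-- `F_1, …, F_K` are linearly independent modulo
`N = {(x,y) ↦ κ(y) − κ(x) − c}` (as functions on `E`). -/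
def LinIndepModN {X : Type*} (E : Set (X × X)) {K : ℕ} (F : Fin K → X → X → ℝ) : Prop :=
  ∀ a : Fin K → ℝ,
    (∃ (κ : X → ℝ) (c : ℝ), ∀ x y : X, (x, y) ∈ E →
      ∑ k : Fin K, a k * F k x y = κ y - κ x - c) →
    a = 0

/-- Membership in the exponential family generated by `C, F_1, …, F_K`. -/
def MemExpFam {X : Type*} [Fintype X] (E : Set (X × X)) {K : ℕ}
    (C : X → X → ℝ) (F : Fin K → X → X → ℝ) (w : X → X → ℝ) : Prop :=
  MemW E w ∧ ∃ (θ : Fin K → ℝ) (κ : X → ℝ) (ψ : ℝ), ∀ x y : X, (x, y) ∈ E →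
    w x y = Real.exp (C x y + ∑ k : Fin K, θ k * F k x y + κ y - κ x - ψ)

/-- Membership in the mixture family `M(μ_1,…,μ_K)`:
`Σ_{(x,y)∈E} p_w(x) w(y|x) F_k(x,y) = μ_k` for all `k`. -/
def MemMix {X : Type*} [Fintype X] (E : Set (X × X)) {K : ℕ}
    (F : Fin K → X → X → ℝ) (μ : Fin K → ℝ) (w : X → X → ℝ) : Prop :=
  MemW E w ∧ ∀ k : Fin K,
    (∑ x : X, ∑ y : X, if (x, y) ∈ E then statDist w x * w x y * F k x y else 0) = μ k



lemma exists_stationary {X : Type*} [Fintype X] [Nonempty X]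
    (w : X → X → ℝ) (hker : IsMarkovKernel w) : ∃ p : X → ℝ, IsStationaryDistrib w p := by
  classical
  set P : Matrix X X ℝ := Matrix.of w with hP
  have hdet : (P - 1).det = 0 := by
    rw [← Matrix.exists_mulVec_eq_zero_iff]
    refine ⟨fun _ => 1, ?_, ?_⟩
    · intro h
      have := congrFun h (Classical.arbitrary X)
      simp at this
    · funext x
      simp only [Matrix.mulVec, Matrix.sub_apply, dotProduct, mul_one,
        Finset.sum_sub_distrib, Pi.zero_apply, Matrix.one_apply, Finset.sum_ite_eq,
        Finset.mem_univ, if_true]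
      have : ∑ y : X, P x y = 1 := hker.2 x
      rw [this]; ring
  obtain ⟨v, hv0, hvP⟩ := Matrix.exists_vecMul_eq_zero_iff.mpr hdet
  have hv : ∀ y : X, ∑ x : X, v x * w x y = v y := by
    intro y
    have := congrFun hvP y
    simp only [Matrix.vecMul, Matrix.sub_apply, dotProduct, mul_sub, Matrix.one_apply,
      Finset.sum_sub_distrib, Pi.zero_apply, mul_ite, mul_one, mul_zero,
      Finset.sum_ite_eq', Finset.mem_univ, if_true] at this
    have h2 : ∑ x : X, v x * P x y = v y := by linarith
    exact h2
  set u : X → ℝ := fun x => |v x| with hu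
  have hstat : ∀ y : X, ∑ x : X, u x * w x y = u y := by
    have h1 : ∀ y : X, u y ≤ ∑ x : X, u x * w x y := by
      intro y
      calc u y = |∑ x : X, v x * w x y| := by rw [hv y]
        _ ≤ ∑ x : X, |v x * w x y| := Finset.abs_sum_le_sum_abs _ _
        _ = ∑ x : X, u x * w x y := by
            refine Finset.sum_congr rfl fun x _ => ?_
            rw [abs_mul, abs_of_nonneg (hker.1 x y)]
    have h2 : ∑ y : X, (∑ x : X, u x * w x y) = ∑ y : X, u y := by
      rw [Finset.sum_comm]
      refine Finset.sum_congr rfl fun x _ => ?_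
      rw [← Finset.mul_sum, hker.2 x, mul_one]
    intro y
    have h3 : ∀ z ∈ Finset.univ, 0 ≤ (∑ x : X, u x * w x z) - u z :=
      fun z _ => sub_nonneg.mpr (h1 z)
    have h4 : ∑ z : X, ((∑ x : X, u x * w x z) - u z) = 0 := by
      rw [Finset.sum_sub_distrib, h2, sub_self]
    have := (Finset.sum_eq_zero_iff_of_nonneg h3).mp h4 y (Finset.mem_univ y)
    linarith
  have hS : 0 < ∑ x : X, u x := by
    have hne : ∃ x, v x ≠ 0 := by
      by_contra h; push_neg at h; exact hv0 (funext h)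
    obtain ⟨x0, hx0⟩ := hne
    have : 0 < u x0 := abs_pos.mpr hx0
    exact Finset.sum_pos' (fun x _ => abs_nonneg _) ⟨x0, Finset.mem_univ x0, this⟩
  refine ⟨fun x => u x / (∑ z : X, u z), fun x => div_nonneg (abs_nonneg _) hS.le, ?_, ?_⟩
  · rw [← Finset.sum_div, div_self hS.ne']
  · intro y
    rw [show ∑ x : X, u x / (∑ z : X, u z) * w x y
        = (∑ x : X, u x * w x y) / (∑ z : X, u z) by
      rw [Finset.sum_div]; exact Finset.sum_congr rfl fun x _ => by ring]
    rw [hstat y]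

lemma stationary_pos {X : Type*} [Fintype X] [Nonempty X] {E : Set (X × X)}
    (hE : StronglyConnected E) {w : X → X → ℝ} (hw0 : ∀ x y : X, 0 ≤ w x y)
    (hwE : ∀ x y : X, (x, y) ∈ E → 0 < w x y)
    {p : X → ℝ} (hp : IsStationaryDistrib w p) : ∀ x : X, 0 < p x := by
  obtain ⟨x0, hx0⟩ : ∃ x0, 0 < p x0 := by
    by_contra h
    push_neg at h
    have : ∑ x : X, p x = 0 :=
      Finset.sum_eq_zero fun x _ => le_antisymm (h x) (hp.1 x)
    rw [hp.2.1] at this; norm_num at this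
  intro y
  have hpath := hE x0 y
  induction hpath with
  | refl => exact hx0
  | tail _ hedge ih =>
    rename_i b c _
    have h1 : p b * w b c ≤ ∑ x : X, p x * w x c :=
      Finset.single_le_sum (f := fun x => p x * w x c)
        (fun x _ => mul_nonneg (hp.1 x) (hw0 x c)) (Finset.mem_univ b)
    have h2 : 0 < p b * w b c := mul_pos ih (hwE b c hedge)
    rw [hp.2.2 c] at h1
    linarith

/-- the natural parameter of the unique element of the
intersection is the unique global minimizer of the dual objective. -/
theorem stmt_12 {X : Type*} [Fintype X] [Nonempty X] (E : Set (X × X))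
    (hE : StronglyConnected E) (K : ℕ)
    (C : X → X → ℝ) (F : Fin K → X → X → ℝ) (hF : LinIndepModN E F)
    (μ : Fin K → ℝ)
    (ψ : (Fin K → ℝ) → ℝ) (κ : (Fin K → ℝ) → X → ℝ)
    (w : (Fin K → ℝ) → X → X → ℝ)
    (hw : ∀ (θ : Fin K → ℝ) (x y : X), w θ x y = if (x, y) ∈ E then
        Real.exp (C x y + ∑ k : Fin K, θ k * F k x y + κ θ y - κ θ x - ψ θ) else 0)
    (hker : ∀ θ : Fin K → ℝ, IsMarkovKernel (w θ))
    (θstar : Fin K → ℝ) (hθstar : MemMix E F μ (w θstar)) :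
    (∀ θ : Fin K → ℝ,
        ψ θstar - ∑ k : Fin K, θstar k * μ k ≤ ψ θ - ∑ k : Fin K, θ k * μ k) ∧
    ∀ θ : Fin K → ℝ,
        ψ θstar - ∑ k : Fin K, θstar k * μ k = ψ θ - ∑ k : Fin K, θ k * μ k →
        θ = θstar := by
  classical
  have hpos : ∀ (θ : Fin K → ℝ) (x y : X), (x, y) ∈ E → 0 < w θ x y := by
    intro θ x y hxy; rw [hw θ x y, if_pos hxy]; exact Real.exp_pos _
  have hzero : ∀ (θ : Fin K → ℝ) (x y : X), (x, y) ∉ E → w θ x y = 0 := by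
    intro θ x y hxy; rw [hw θ x y, if_neg hxy]
  set p := statDist (w θstar) with hpdef
  set a := w θstar with hadef
  have hex : ∃ q : X → ℝ, IsStationaryDistrib (w θstar) q :=
    exists_stationary _ (hker θstar)
  have hstat : IsStationaryDistrib (w θstar) p := by
    rw [hpdef, statDist, dif_pos hex]; exact hex.choose_spec
  have hppos : ∀ x : X, 0 < p x :=
    stationary_pos hE (fun x y => (hker θstar).1 x y)
      (fun x y h => hpos θstar x y h) hstat
  have hrow : ∀ x : X, ∑ y : X, a x y = 1 := (hker θstar).2
  have hμ : ∀ k : Fin K, ∑ x : X, ∑ y : X, p x * a x y * F k x y = μ k := by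
    intro k
    rw [← hθstar.2 k]
    refine Finset.sum_congr rfl fun x _ => Finset.sum_congr rfl fun y _ => ?_
    split
    · rfl
    · rename_i h
      rw [show a x y = 0 from hzero θstar x y h]; ring
  have key : ∀ θ : Fin K → ℝ,
      (ψ θstar - ∑ k : Fin K, θstar k * μ k ≤ ψ θ - ∑ k : Fin K, θ k * μ k) ∧
      ((ψ θstar - ∑ k : Fin K, θstar k * μ k = ψ θ - ∑ k : Fin K, θ k * μ k) →
        θ = θstar) := by
    intro θ
    set b := w θ with hbdef
    -- logarithm of the likelihood ratio on edges
    have hlog : ∀ x y : X, (x, y) ∈ E →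
        Real.log (a x y / b x y) =
          (∑ k : Fin K, (θstar k - θ k) * F k x y)
            + ((κ θstar y - κ θ y) - (κ θstar x - κ θ x)) - (ψ θstar - ψ θ) := by
      intro x y hxy
      rw [hadef, hbdef, hw θstar x y, hw θ x y, if_pos hxy, if_pos hxy,
        ← Real.exp_sub, Real.log_exp]
      have hs : ∑ k : Fin K, (θstar k - θ k) * F k x y
          = (∑ k : Fin K, θstar k * F k x y) - ∑ k : Fin K, θ k * F k x y := by
        rw [← Finset.sum_sub_distrib]
        exact Finset.sum_congr rfl fun k _ => by ring
      rw [hs]; ring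
    -- the divergence-rate identity
    have hD : ∑ x : X, ∑ y : X, p x * a x y * Real.log (a x y / b x y)
        = (ψ θ - ∑ k : Fin K, θ k * μ k) - (ψ θstar - ∑ k : Fin K, θstar k * μ k) := by
      have step1 : ∀ x y : X, p x * a x y * Real.log (a x y / b x y)
          = (∑ k : Fin K, (θstar k - θ k) * (p x * a x y * F k x y))
            + (p x * a x y * (κ θstar y - κ θ y) - p x * a x y * (κ θstar x - κ θ x))
            - p x * a x y * (ψ θstar - ψ θ) := by
        intro x y
        by_cases hxy : (x, y) ∈ E
        · have hs : ∑ k : Fin K, (θstar k - θ k) * (p x * a x y * F k x y)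
              = p x * a x y * ∑ k : Fin K, (θstar k - θ k) * F k x y := by
            rw [Finset.mul_sum]
            exact Finset.sum_congr rfl fun k _ => by ring
          rw [hlog x y hxy, hs]; ring
        · rw [show a x y = 0 from hzero θstar x y hxy]
          simp
      calc ∑ x : X, ∑ y : X, p x * a x y * Real.log (a x y / b x y)
          = ∑ x : X, ∑ y : X,
              ((∑ k : Fin K, (θstar k - θ k) * (p x * a x y * F k x y))
                + (p x * a x y * (κ θstar y - κ θ y) - p x * a x y * (κ θstar x - κ θ x))
                - p x * a x y * (ψ θstar - ψ θ)) :=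
            Finset.sum_congr rfl fun x _ => Finset.sum_congr rfl fun y _ => step1 x y
        _ = (∑ x : X, ∑ y : X, ∑ k : Fin K, (θstar k - θ k) * (p x * a x y * F k x y))
            + ((∑ x : X, ∑ y : X, p x * a x y * (κ θstar y - κ θ y))
              - ∑ x : X, ∑ y : X, p x * a x y * (κ θstar x - κ θ x))
            - ∑ x : X, ∑ y : X, p x * a x y * (ψ θstar - ψ θ) := by
            simp only [Finset.sum_add_distrib, Finset.sum_sub_distrib]
        _ = (ψ θ - ∑ k : Fin K, θ k * μ k)
            - (ψ θstar - ∑ k : Fin K, θstar k * μ k) := ?_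
      have e1 : ∑ x : X, ∑ y : X, ∑ k : Fin K, (θstar k - θ k) * (p x * a x y * F k x y)
          = ∑ k : Fin K, (θstar k - θ k) * μ k := by
        have sw : ∀ x : X, ∑ y : X, ∑ k : Fin K, (θstar k - θ k) * (p x * a x y * F k x y)
            = ∑ k : Fin K, ∑ y : X, (θstar k - θ k) * (p x * a x y * F k x y) :=
          fun x => Finset.sum_comm
        simp_rw [sw]
        rw [Finset.sum_comm]
        refine Finset.sum_congr rfl fun k _ => ?_
        rw [← hμ k, Finset.mul_sum]
        exact Finset.sum_congr rfl fun x _ => by rw [Finset.mul_sum]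
      have e2 : ∑ x : X, ∑ y : X, p x * a x y * (κ θstar y - κ θ y)
          = ∑ x : X, p x * (κ θstar x - κ θ x) := by
        rw [Finset.sum_comm]
        refine Finset.sum_congr rfl fun y _ => ?_
        calc ∑ x : X, p x * a x y * (κ θstar y - κ θ y)
            = (∑ x : X, p x * a x y) * (κ θstar y - κ θ y) := by
              rw [Finset.sum_mul]
          _ = p y * (κ θstar y - κ θ y) := by rw [hstat.2.2 y]
      have e3 : ∑ x : X, ∑ y : X, p x * a x y * (κ θstar x - κ θ x)
          = ∑ x : X, p x * (κ θstar x - κ θ x) := by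
        refine Finset.sum_congr rfl fun x _ => ?_
        calc ∑ y : X, p x * a x y * (κ θstar x - κ θ x)
            = (p x * (κ θstar x - κ θ x)) * ∑ y : X, a x y := by
              rw [Finset.mul_sum]
              exact Finset.sum_congr rfl fun y _ => by ring
          _ = p x * (κ θstar x - κ θ x) := by rw [hrow x, mul_one]
      have e4 : ∑ x : X, ∑ y : X, p x * a x y * (ψ θstar - ψ θ)
          = ψ θstar - ψ θ := by
        calc ∑ x : X, ∑ y : X, p x * a x y * (ψ θstar - ψ θ)
            = ∑ x : X, p x * (ψ θstar - ψ θ) := by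
              refine Finset.sum_congr rfl fun x _ => ?_
              calc ∑ y : X, p x * a x y * (ψ θstar - ψ θ)
                  = (p x * (ψ θstar - ψ θ)) * ∑ y : X, a x y := by
                    rw [Finset.mul_sum]
                    exact Finset.sum_congr rfl fun y _ => by ring
                _ = p x * (ψ θstar - ψ θ) := by rw [hrow x, mul_one]
          _ = (∑ x : X, p x) * (ψ θstar - ψ θ) := by rw [Finset.sum_mul]
          _ = ψ θstar - ψ θ := by rw [hstat.2.1, one_mul]
      rw [e1, e2, e3, e4]
      have e5 : ∑ k : Fin K, (θstar k - θ k) * μ k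
          = (∑ k : Fin K, θstar k * μ k) - ∑ k : Fin K, θ k * μ k := by
        rw [← Finset.sum_sub_distrib]
        exact Finset.sum_congr rfl fun k _ => by ring
      rw [e5]; ring
    -- nonnegativity of each Gibbs term
    have hT : ∀ x y : X,
        0 ≤ p x * (a x y * Real.log (a x y / b x y) + b x y - a x y) := by
      intro x y
      by_cases hxy : (x, y) ∈ E
      · have haP : 0 < a x y := hpos θstar x y hxy
        have hbP : 0 < b x y := hpos θ x y hxy
        have h1 : Real.log (b x y / a x y) ≤ b x y / a x y - 1 :=
          Real.log_le_sub_one_of_pos (div_pos hbP haP)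
        have h2 : Real.log (b x y / a x y) = -Real.log (a x y / b x y) := by
          rw [Real.log_div hbP.ne' haP.ne', Real.log_div haP.ne' hbP.ne']; ring
        rw [h2] at h1
        have h3 := mul_le_mul_of_nonneg_left h1 haP.le
        have h4 : a x y * (b x y / a x y - 1) = b x y - a x y := by
          field_simp
        rw [h4] at h3
        exact mul_nonneg (hppos x).le (by nlinarith)
      · rw [show a x y = 0 from hzero θstar x y hxy,
          show b x y = 0 from hzero θ x y hxy]
        simp
    -- the Gibbs sum equals the divergence rate
    have hsumT : ∑ x : X, ∑ y : X,
        p x * (a x y * Real.log (a x y / b x y) + b x y - a x y)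
        = (ψ θ - ∑ k : Fin K, θ k * μ k) - (ψ θstar - ∑ k : Fin K, θstar k * μ k) := by
      have expand : ∀ x y : X,
          p x * (a x y * Real.log (a x y / b x y) + b x y - a x y)
          = p x * a x y * Real.log (a x y / b x y) + (p x * b x y - p x * a x y) := by
        intro x y; ring
      simp_rw [expand]
      simp only [Finset.sum_add_distrib, Finset.sum_sub_distrib]
      rw [hD]
      have hb1 : ∀ x : X, ∑ y : X, p x * b x y = p x := by
        intro x; rw [← Finset.mul_sum, (hker θ).2 x, mul_one]
      have ha1 : ∀ x : X, ∑ y : X, p x * a x y = p x := by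
        intro x; rw [← Finset.mul_sum, hrow x, mul_one]
      simp_rw [hb1, ha1]
      ring
    have hDnn : 0 ≤ (ψ θ - ∑ k : Fin K, θ k * μ k)
        - (ψ θstar - ∑ k : Fin K, θstar k * μ k) := by
      rw [← hsumT]
      exact Finset.sum_nonneg fun x _ => Finset.sum_nonneg fun y _ => hT x y
    refine ⟨by linarith, ?_⟩
    intro hEq
    have hTsum0 : ∑ x : X, ∑ y : X,
        p x * (a x y * Real.log (a x y / b x y) + b x y - a x y) = 0 := by
      rw [hsumT]; linarith
    have hzeroT : ∀ x y : X,
        p x * (a x y * Real.log (a x y / b x y) + b x y - a x y) = 0 := by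
      intro x y
      have houter := (Finset.sum_eq_zero_iff_of_nonneg
        (fun x _ => Finset.sum_nonneg fun y _ => hT x y)).mp hTsum0
      exact (Finset.sum_eq_zero_iff_of_nonneg (fun y _ => hT x y)).mp
        (houter x (Finset.mem_univ x)) y (Finset.mem_univ y)
    have hab : ∀ x y : X, (x, y) ∈ E → a x y = b x y := by
      intro x y hxy
      by_contra hne
      have haP : 0 < a x y := hpos θstar x y hxy
      have hbP : 0 < b x y := hpos θ x y hxy
      have hne1 : b x y / a x y ≠ 1 := by
        intro h
        exact hne ((div_eq_one_iff_eq haP.ne').mp h).symm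
      have h1 : Real.log (b x y / a x y) < b x y / a x y - 1 :=
        Real.log_lt_sub_one_of_pos (div_pos hbP haP) hne1
      have h2 : Real.log (b x y / a x y) = -Real.log (a x y / b x y) := by
        rw [Real.log_div hbP.ne' haP.ne', Real.log_div haP.ne' hbP.ne']; ring
      rw [h2] at h1
      have h3 := mul_lt_mul_of_pos_left h1 haP
      have h4 : a x y * (b x y / a x y - 1) = b x y - a x y := by field_simp
      rw [h4] at h3
      have h5 := hzeroT x y
      nlinarith [hppos x]
    -- transfer equality of kernels to equality of parameters via linear independence
    have hexp : ∀ x y : X, (x, y) ∈ E →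
        ∑ k : Fin K, (θstar k - θ k) * F k x y
          = (κ θ y - κ θstar y) - (κ θ x - κ θstar x) - (ψ θ - ψ θstar) := by
      intro x y hxy
      have h := hab x y hxy
      rw [hadef, hbdef, hw θstar x y, hw θ x y, if_pos hxy, if_pos hxy,
        Real.exp_eq_exp] at h
      have hs : ∑ k : Fin K, (θstar k - θ k) * F k x y
          = (∑ k : Fin K, θstar k * F k x y) - ∑ k : Fin K, θ k * F k x y := by
        rw [← Finset.sum_sub_distrib]
        exact Finset.sum_congr rfl fun k _ => by ring
      rw [hs]; linarith
    have h0 := hF (fun k => θstar k - θ k)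
      ⟨fun x => κ θ x - κ θstar x, ψ θ - ψ θstar, hexp⟩
    funext k
    have hk := congrFun h0 k
    simp only [Pi.zero_apply] at hk
    linarith
  exact ⟨fun θ => (key θ).1, fun θ => (key θ).2⟩
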